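/- arXiv:1811.00758 — 7 statements merged into one kernel-verified Lean document; each statement's English description precedes it below -/
import Mathlib

section
/- Let a ∈ ℂ, a ≠ 0, and let y_1 ∈ ℂ with y_1 ≠ 0, y_1 ≠ a, and y_1/(y_1 - a) not a root of unity. Define h_r(x) = a·x^r/(x^r - (x-a)^r) for integer r > 1, and y_{k+1} = h_r(y_k). Then for all k ≥ 1, y_k - a = a / ((y_1/(y_1 - a))^{r^{k-1}} - 1). -/
/-!
The Möbius map `y ↦ y / (y - a)` conjugates `h_r` to `w ↦ w ^ r`: writing `y - a = a / (w - 1)`,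
one gets `h_r(y) - a = a / (w ^ r - 1)`. Hence the `k`-th iterate corresponds to `w ^ (r ^ (k - 1))`,
and the root-of-unity hypothesis keeps every denominator nonzero.
-/

theorem sub_eq_div_div_sub_sub_one {K : Type*} [Field K] {a y : K} (ha : a ≠ 0)
    (hya : y - a ≠ 0) : y - a = a / (y / (y - a) - 1) := by
  rw [div_sub_one hya, sub_sub_cancel, div_div_cancel₀ ha]

theorem mul_pow_div_pow_sub_pow_sub_eq {K : Type*} [Field K] {a w y : K} (ha : a ≠ 0)
    (hw : w ≠ 1) (hy : y - a = a / (w - 1)) {n : ℕ} (hwn : w ^ n ≠ 1) :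
    a * y ^ n / (y ^ n - (y - a) ^ n) - a = a / (w ^ n - 1) := by
  have hc : (a / (w - 1)) ^ n ≠ 0 := pow_ne_zero _ (div_ne_zero ha (sub_ne_zero.mpr hw))
  have hyw : y = a / (w - 1) * w := by
    rw [← sub_add_cancel y a, hy]
    field_simp [sub_ne_zero.mpr hw]
    ring
  have hden : y ^ n - (y - a) ^ n = (a / (w - 1)) ^ n * (w ^ n - 1) := by
    rw [hy, hyw, mul_pow]
    ring
  rw [hden, hyw, mul_pow, mul_left_comm, mul_div_mul_left _ _ hc]
  field_simp [sub_ne_zero.mpr hwn]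
  ring

theorem stmt_5_general (a : ℂ) (ha : a ≠ 0) (y1 : ℂ) (hya : y1 ≠ a)
    (hroot : ¬ ∃ p : ℕ, 0 < p ∧ (y1 / (y1 - a)) ^ p = 1)
    (r : ℕ) (hr : 1 < r) (y : ℕ → ℂ) (hy1 : y 1 = y1)
    (hrec : ∀ k ≥ 1, y (k + 1) = a * (y k) ^ r / ((y k) ^ r - (y k - a) ^ r)) :
    ∀ k ≥ 1, y k - a = a / ((y1 / (y1 - a)) ^ (r ^ (k - 1)) - 1) := by
  have hq : ∀ n, (y1 / (y1 - a)) ^ r ^ n ≠ 1 := fun n h =>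
    hroot ⟨r ^ n, pow_pos (by omega) n, h⟩
  intro k hk
  induction k, hk using Nat.le_induction with
  | base => simpa [hy1] using sub_eq_div_div_sub_sub_one ha (sub_ne_zero.mpr hya)
  | succ k hk ih =>
    obtain ⟨j, rfl⟩ := Nat.exists_eq_add_of_le' hk
    rw [hrec _ hk, Nat.add_sub_cancel, pow_succ, pow_mul]
    refine mul_pow_div_pow_sub_pow_sub_eq ha (hq j) (by simpa using ih) ?_
    rw [← pow_mul, ← pow_succ]
    exact hq (j + 1)

theorem stmt_5 (a : ℂ) (ha : a ≠ 0) (y1 : ℂ) (hy0 : y1 ≠ 0) (hya : y1 ≠ a)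
    (hroot : ¬ ∃ p : ℕ, 0 < p ∧ (y1 / (y1 - a)) ^ p = 1)
    (r : ℕ) (hr : 1 < r) (y : ℕ → ℂ) (hy1 : y 1 = y1)
    (hrec : ∀ k ≥ 1, y (k + 1) = a * (y k) ^ r / ((y k) ^ r - (y k - a) ^ r)) :
    ∀ k ≥ 1, y k - a = a / ((y1 / (y1 - a)) ^ (r ^ (k - 1)) - 1) :=
  stmt_5_general a ha y1 hya hroot r hr y hy1 hrec
end

section
/- Define on pairs Z = (x, y) ∈ ℂ² the operation G((x_a, y_a), (x_b, y_b)) = ( x_b·x_a/(x_b + y_a), y_b·y_a/(x_b + y_a) ). Then for any X, Y, Z ∈ ℂ² such that all relevant denominators are nonzero, G(G(X, Y), Z) = G(X, G(Y, Z)). -/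
/-- The binary operation of Example 2.2. -/
noncomputable def Gop (X Y : ℂ × ℂ) : ℂ × ℂ :=
  (Y.1 * X.1 / (Y.1 + X.2), Y.2 * X.2 / (Y.1 + X.2))

theorem stmt_6 (X Y Z : ℂ × ℂ)
    (h1 : Y.1 + X.2 ≠ 0)
    (h2 : Z.1 + (Gop X Y).2 ≠ 0)
    (h3 : Z.1 + Y.2 ≠ 0)
    (h4 : (Gop Y Z).1 + X.2 ≠ 0) :
    Gop (Gop X Y) Z = Gop X (Gop Y Z) := by
  simp only [Gop] at *
  obtain ⟨x1, x2⟩ := X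
  obtain ⟨y1, y2⟩ := Y
  obtain ⟨z1, z2⟩ := Z
  simp only [Prod.mk.injEq] at *
  constructor <;> field_simp <;> ring
end

section
/- Let x_1, y_1 ∈ ℂ with x_1·y_1 ≠ 0, x_1 ≠ y_1, and x_1/y_1 not a root of unity. Define the iteration (x_{k+1}, y_{k+1}) = ( x_1·x_k/(x_1 + y_k), y_1·y_k/(x_1 + y_k) ). Then for all k ≥ 1 the iteration is well defined (denominators nonzero) and x_k = (x_1 - y_1)x_1^k/(x_1^k - y_1^k), y_k = (x_1 - y_1)y_1^k/(x_1^k - y_1^k). -/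
theorem stmt_7 (x1 y1 : ℂ) (h0 : x1 * y1 ≠ 0) (hne : x1 ≠ y1)
    (hroot : ¬ ∃ p : ℕ, 0 < p ∧ (x1 / y1) ^ p = 1)
    (x y : ℕ → ℂ) (hx1 : x 1 = x1) (hy1 : y 1 = y1)
    (hxrec : ∀ k ≥ 1, x (k + 1) = x1 * x k / (x1 + y k))
    (hyrec : ∀ k ≥ 1, y (k + 1) = y1 * y k / (x1 + y k)) :
    ∀ k ≥ 1, x1 + y k ≠ 0 ∧
      x k = (x1 - y1) * x1 ^ k / (x1 ^ k - y1 ^ k) ∧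
      y k = (x1 - y1) * y1 ^ k / (x1 ^ k - y1 ^ k) := by
  have hx0 : x1 ≠ 0 := fun h => h0 (by simp [h])
  have hy0 : y1 ≠ 0 := fun h => h0 (by simp [h])
  have hd : x1 - y1 ≠ 0 := sub_ne_zero.mpr hne
  have hpk : ∀ k : ℕ, 1 ≤ k → x1 ^ k - y1 ^ k ≠ 0 := by
    intro k hk h
    refine hroot ⟨k, hk, ?_⟩
    have hyk : y1 ^ k ≠ 0 := pow_ne_zero _ hy0
    rw [div_pow, div_eq_one_iff_eq hyk]
    linear_combination h
  intro k hk
  induction k, hk using Nat.le_induction with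
  | base =>
    refine ⟨?_, ?_, ?_⟩
    · intro h
      rw [hy1] at h
      exact hpk 2 (by norm_num) (by linear_combination (x1 - y1) * h)
    · rw [hx1]; field_simp
    · rw [hy1]; field_simp
  | succ k hk ih =>
    obtain ⟨hs, hxk, hyk⟩ := ih
    have hk1 := hpk k hk
    have hk2 := hpk (k + 1) (by omega)
    have hsum : x1 + y k = (x1 ^ (k + 1) - y1 ^ (k + 1)) / (x1 ^ k - y1 ^ k) := by
      rw [hyk]; field_simp; ring
    have hxnew : x (k + 1) = (x1 - y1) * x1 ^ (k + 1) / (x1 ^ (k + 1) - y1 ^ (k + 1)) := by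
      rw [hxrec k hk, hxk, hsum]; field_simp; ring
    have hynew : y (k + 1) = (x1 - y1) * y1 ^ (k + 1) / (x1 ^ (k + 1) - y1 ^ (k + 1)) := by
      rw [hyrec k hk, hsum, hyk]; field_simp; ring
    refine ⟨?_, hxnew, hynew⟩
    have hk3 := hpk (k + 2) (by omega)
    have hsum2 : x1 + y (k + 1) = (x1 ^ (k + 2) - y1 ^ (k + 2)) / (x1 ^ (k + 1) - y1 ^ (k + 1)) := by
      rw [hynew]; field_simp; ring
    rw [hsum2]
    exact div_ne_zero hk3 hk2
end

section
/- Fix an n×n complex matrix A. For n×n matrices X, Y with A + X + Y invertible, define F(X,Y) = X (A + X + Y)⁻¹ Y. Then for all X, Y, Z such that A + X + Y, A + Y + Z, and A + F(X,Y) + Z (equivalently A + X + F(Y,Z)) are invertible, F(F(X,Y), Z) = F(X, F(Y,Z)). -/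
/-- The binary matrix operation of Example 3.4: `F(X,Y) = X (A+X+Y)⁻¹ Y`. -/
noncomputable def Fop {n : ℕ} (A X Y : Matrix (Fin n) (Fin n) ℂ) : Matrix (Fin n) (Fin n) ℂ :=
  X * (A + X + Y)⁻¹ * Y

theorem stmt_13 (n : ℕ) (A X Y Z : Matrix (Fin n) (Fin n) ℂ)
    (h1 : IsUnit (A + X + Y)) (h2 : IsUnit (A + Y + Z))
    (h3 : IsUnit (A + Fop A X Y + Z)) (h4 : IsUnit (A + X + Fop A Y Z)) :
    Fop A (Fop A X Y) Z = Fop A X (Fop A Y Z) := by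
  set B := A + X + Y with hBdef
  set C := A + Y + Z with hCdef
  set M := A + X * B⁻¹ * Y + Z with hMdef
  set N := A + X + Y * C⁻¹ * Z with hNdef
  have h3' : IsUnit M := by simpa [Fop, hMdef] using h3
  have h4' : IsUnit N := by simpa [Fop, hNdef] using h4
  have hBB : B * B⁻¹ = 1 := Matrix.mul_nonsing_inv _ ((Matrix.isUnit_iff_isUnit_det _).mp h1)
  have hCC : C⁻¹ * C = 1 := Matrix.nonsing_inv_mul _ ((Matrix.isUnit_iff_isUnit_det _).mp h2)
  have hMM : M * M⁻¹ = 1 := Matrix.mul_nonsing_inv _ ((Matrix.isUnit_iff_isUnit_det _).mp h3')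
  have hNN : N⁻¹ * N = 1 := Matrix.nonsing_inv_mul _ ((Matrix.isUnit_iff_isUnit_det _).mp h4')
  have hBy : B * (B⁻¹ * Y) = Y := by rw [← mul_assoc, hBB, one_mul]
  have hyC : Y * C⁻¹ * C = Y := by rw [mul_assoc, hCC, mul_one]
  -- rewrite N and M
  have hNB : N = B - Y * C⁻¹ * (A + Y) := by
    have h5 : Y * C⁻¹ * C = Y * C⁻¹ * (A + Y) + Y * C⁻¹ * Z := by
      rw [hCdef]; noncomm_ring
    rw [hyC] at h5
    have hz : Y * C⁻¹ * Z = Y - Y * C⁻¹ * (A + Y) := eq_sub_of_add_eq' h5.symm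
    rw [hNdef, hz, hBdef]; noncomm_ring
  have hMC : M = C - (A + Y) * (B⁻¹ * Y) := by
    have h5 : B * (B⁻¹ * Y) = (A + Y) * (B⁻¹ * Y) + X * (B⁻¹ * Y) := by
      rw [hBdef]; noncomm_ring
    rw [hBy] at h5
    have hx : X * B⁻¹ * Y = Y - (A + Y) * (B⁻¹ * Y) := by
      rw [mul_assoc]; exact eq_sub_of_add_eq' h5.symm
    rw [hMdef, hx, hCdef]; noncomm_ring
  have key : N * (B⁻¹ * Y) = Y * C⁻¹ * M := by
    rw [hNB, hMC, sub_mul, mul_sub, hBy, hyC]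
    noncomm_ring
  have key2 : B⁻¹ * Y * M⁻¹ = N⁻¹ * (Y * C⁻¹) := by
    calc B⁻¹ * Y * M⁻¹ = N⁻¹ * (N * (B⁻¹ * Y)) * M⁻¹ := by
          rw [← mul_assoc, hNN, one_mul]
      _ = N⁻¹ * (Y * C⁻¹ * M) * M⁻¹ := by rw [key]
      _ = N⁻¹ * (Y * C⁻¹) * (M * M⁻¹) := by noncomm_ring
      _ = N⁻¹ * (Y * C⁻¹) := by rw [hMM, mul_one]
  show X * B⁻¹ * Y * (A + X * B⁻¹ * Y + Z)⁻¹ * Z = X * (A + X + Y * C⁻¹ * Z)⁻¹ * (Y * C⁻¹ * Z)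
  rw [← hMdef, ← hNdef]
  calc X * B⁻¹ * Y * M⁻¹ * Z = X * (B⁻¹ * Y * M⁻¹) * Z := by noncomm_ring
    _ = X * (N⁻¹ * (Y * C⁻¹)) * Z := by rw [key2]
    _ = X * N⁻¹ * (Y * C⁻¹ * Z) := by noncomm_ring
end

section
/- Fix an n×n matrix A and matrices X, Y, Z, let F(U,V) = U(A+U+V)⁻¹V, and suppose that Δ_{X,Y} := (A+X+Y)⁻¹, Δ_{Y,Z} := (A+Y+Z)⁻¹ and Δ_{X,F(Y,Z)} := (A + X + F(Y,Z))⁻¹ = (A + X + Y(A+Y+Z)⁻¹Z)⁻¹ all exist. Then Δ_{X,F(Y,Z)} Y Δ_{Y,Z} = Δ_{X,Y} Y Δ_{F(X,Y),Z}, where Δ_{F(X,Y),Z} := (A + F(X,Y) + Z)⁻¹. -/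
theorem stmt_14 (n : ℕ) (A X Y Z : Matrix (Fin n) (Fin n) ℂ)
    (h1 : IsUnit (A + X + Y)) (h2 : IsUnit (A + Y + Z))
    (h3 : IsUnit (A + X + Fop A Y Z)) (h4 : IsUnit (A + Fop A X Y + Z)) :
    (A + X + Fop A Y Z)⁻¹ * Y * (A + Y + Z)⁻¹ =
      (A + X + Y)⁻¹ * Y * (A + Fop A X Y + Z)⁻¹ := by
  have d1 := (Matrix.isUnit_iff_isUnit_det _).mp h1
  have d2 := (Matrix.isUnit_iff_isUnit_det _).mp h2
  have d3 := (Matrix.isUnit_iff_isUnit_det _).mp h3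
  have d4 := (Matrix.isUnit_iff_isUnit_det _).mp h4
  have i1 : (A + X + Y) * (A + X + Y)⁻¹ = 1 := Matrix.mul_nonsing_inv _ d1
  have i2' : (A + Y + Z)⁻¹ * (A + Y + Z) = 1 := Matrix.nonsing_inv_mul _ d2
  have i3' : (A + X + Fop A Y Z)⁻¹ * (A + X + Fop A Y Z) = 1 := Matrix.nonsing_inv_mul _ d3
  have i4 : (A + Fop A X Y + Z) * (A + Fop A X Y + Z)⁻¹ = 1 := Matrix.mul_nonsing_inv _ d4
  -- e3 : A + X + Fop A Y Z = (A+X+Y) - Y * (A+Y+Z)⁻¹ * (A+Y)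
  have hy2 : Y * (A + Y + Z)⁻¹ * (A + Y) + Y * (A + Y + Z)⁻¹ * Z = Y := by
    calc Y * (A + Y + Z)⁻¹ * (A + Y) + Y * (A + Y + Z)⁻¹ * Z
        = Y * (A + Y + Z)⁻¹ * ((A + Y) + Z) := (Matrix.mul_add _ _ _).symm
      _ = Y := by
        rw [show (A + Y) + Z = A + Y + Z from by abel, Matrix.mul_assoc, i2', Matrix.mul_one]
  have e3 : A + X + Fop A Y Z = (A + X + Y) - Y * (A + Y + Z)⁻¹ * (A + Y) := by
    unfold Fop
    rw [eq_sub_of_add_eq' hy2]; abel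
  -- e4 : A + Fop A X Y + Z = (A+Y+Z) - (A+Y) * (A+X+Y)⁻¹ * Y
  have hy1 : (A + Y) * (A + X + Y)⁻¹ * Y + X * (A + X + Y)⁻¹ * Y = Y := by
    calc (A + Y) * (A + X + Y)⁻¹ * Y + X * (A + X + Y)⁻¹ * Y
        = ((A + Y) + X) * (A + X + Y)⁻¹ * Y := by
          rw [Matrix.add_mul (A + Y) X (A + X + Y)⁻¹,
            Matrix.add_mul ((A + Y) * (A + X + Y)⁻¹) (X * (A + X + Y)⁻¹) Y]
      _ = Y := by rw [show (A + Y) + X = A + X + Y from by abel, i1, Matrix.one_mul]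
  have e4 : A + Fop A X Y + Z = (A + Y + Z) - (A + Y) * (A + X + Y)⁻¹ * Y := by
    unfold Fop
    rw [eq_sub_of_add_eq' hy1]; abel
  -- key identity
  have key : Y * (A + Y + Z)⁻¹ * (A + Fop A X Y + Z) =
      (A + X + Fop A Y Z) * ((A + X + Y)⁻¹ * Y) := by
    rw [e3, e4, Matrix.mul_sub, Matrix.sub_mul]
    have t1 : Y * (A + Y + Z)⁻¹ * (A + Y + Z) = Y := by
      rw [Matrix.mul_assoc, i2', Matrix.mul_one]
    have t2 : (A + X + Y) * ((A + X + Y)⁻¹ * Y) = Y := by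
      rw [← Matrix.mul_assoc, i1, Matrix.one_mul]
    rw [t1, t2]
    congr 1
    simp [Matrix.mul_assoc]
  have c1 : (A + X + Fop A Y Z)⁻¹ * (Y * (A + Y + Z)⁻¹ * (A + Fop A X Y + Z)) *
      (A + Fop A X Y + Z)⁻¹ = (A + X + Fop A Y Z)⁻¹ * Y * (A + Y + Z)⁻¹ := by
    rw [Matrix.mul_assoc ((A + X + Fop A Y Z)⁻¹) (Y * (A + Y + Z)⁻¹ * (A + Fop A X Y + Z))
        ((A + Fop A X Y + Z)⁻¹),
      Matrix.mul_assoc (Y * (A + Y + Z)⁻¹) (A + Fop A X Y + Z) ((A + Fop A X Y + Z)⁻¹),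
      i4, Matrix.mul_one, ← Matrix.mul_assoc]
  have c2 : (A + X + Fop A Y Z)⁻¹ * ((A + X + Fop A Y Z) * ((A + X + Y)⁻¹ * Y)) *
      (A + Fop A X Y + Z)⁻¹ = (A + X + Y)⁻¹ * Y * (A + Fop A X Y + Z)⁻¹ := by
    rw [← Matrix.mul_assoc ((A + X + Fop A Y Z)⁻¹) (A + X + Fop A Y Z) ((A + X + Y)⁻¹ * Y),
      i3', Matrix.one_mul]
  rw [← c1, key, c2]
end

section
/- Define, for pairs (A_a, B_a) and (A_b, B_b) of n×n matrices with Δ_{a,b} := (A_a + B_b)⁻¹ existing, F((A_a,B_a),(A_b,B_b)) = (A_a Δ_{a,b} A_b, B_b Δ_{a,b} B_a). Then whenever all the operations F(X_a,X_b), F(X_b,X_c), F(F(X_a,X_b), X_c), F(X_a, F(X_b,X_c)) are defined (i.e., the corresponding sums are invertible), F(F(X_a,X_b), X_c) = F(X_a, F(X_b,X_c)). -/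
/-- The binary operation underlying the structured iteration of Example 4.2. -/
noncomputable def pencilOp {n : ℕ} (X Y : Matrix (Fin n) (Fin n) ℂ × Matrix (Fin n) (Fin n) ℂ) :
    Matrix (Fin n) (Fin n) ℂ × Matrix (Fin n) (Fin n) ℂ :=
  (X.1 * (X.1 + Y.2)⁻¹ * Y.1, Y.2 * (X.1 + Y.2)⁻¹ * X.2)

private lemma swap_lemma {n : ℕ} (A B : Matrix (Fin n) (Fin n) ℂ) (h : IsUnit (A + B)) :
    A * (A + B)⁻¹ * B = B * (A + B)⁻¹ * A := by
  have e1 : (A + B) * (A + B)⁻¹ = 1 :=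
    Matrix.mul_nonsing_inv _ ((Matrix.isUnit_iff_isUnit_det _).mp h)
  have e2 : (A + B)⁻¹ * (A + B) = 1 :=
    Matrix.nonsing_inv_mul _ ((Matrix.isUnit_iff_isUnit_det _).mp h)
  have hA : A * (A + B)⁻¹ = 1 - B * (A + B)⁻¹ := by
    rw [← e1]; noncomm_ring
  have hA2 : (A + B)⁻¹ * A = 1 - (A + B)⁻¹ * B := by
    rw [← e2]; noncomm_ring
  rw [hA, mul_assoc, hA2]
  noncomm_ring

theorem stmt_17 (n : ℕ) (Xa Xb Xc : Matrix (Fin n) (Fin n) ℂ × Matrix (Fin n) (Fin n) ℂ)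
    (h1 : IsUnit (Xa.1 + Xb.2)) (h2 : IsUnit (Xb.1 + Xc.2))
    (h3 : IsUnit ((pencilOp Xa Xb).1 + Xc.2))
    (h4 : IsUnit (Xa.1 + (pencilOp Xb Xc).2)) :
    pencilOp (pencilOp Xa Xb) Xc = pencilOp Xa (pencilOp Xb Xc) := by
  obtain ⟨Aa, Ba⟩ := Xa
  obtain ⟨Ab, Bb⟩ := Xb
  obtain ⟨Ac, Bc⟩ := Xc
  simp only [pencilOp] at *
  set D1 := (Aa + Bb)⁻¹ with hD1
  set D2 := (Ab + Bc)⁻¹ with hD2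
  set M := Aa * D1 * Ab + Bc with hM
  set N := Aa + Bc * D2 * Bb with hN
  have e1a : (Aa + Bb) * D1 = 1 :=
    Matrix.mul_nonsing_inv _ ((Matrix.isUnit_iff_isUnit_det _).mp h1)
  have e1b : D1 * (Aa + Bb) = 1 :=
    Matrix.nonsing_inv_mul _ ((Matrix.isUnit_iff_isUnit_det _).mp h1)
  have e2a : (Ab + Bc) * D2 = 1 :=
    Matrix.mul_nonsing_inv _ ((Matrix.isUnit_iff_isUnit_det _).mp h2)
  have e2b : D2 * (Ab + Bc) = 1 :=
    Matrix.nonsing_inv_mul _ ((Matrix.isUnit_iff_isUnit_det _).mp h2)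
  have e3a : M * M⁻¹ = 1 :=
    Matrix.mul_nonsing_inv _ ((Matrix.isUnit_iff_isUnit_det _).mp h3)
  have e3b : M⁻¹ * M = 1 :=
    Matrix.nonsing_inv_mul _ ((Matrix.isUnit_iff_isUnit_det _).mp h3)
  have e4a : N * N⁻¹ = 1 :=
    Matrix.mul_nonsing_inv _ ((Matrix.isUnit_iff_isUnit_det _).mp h4)
  have e4b : N⁻¹ * N = 1 :=
    Matrix.nonsing_inv_mul _ ((Matrix.isUnit_iff_isUnit_det _).mp h4)
  have sw1 : Aa * D1 * Bb = Bb * D1 * Aa := swap_lemma Aa Bb h1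
  have sw2 : Ab * D2 * Bc = Bc * D2 * Ab := swap_lemma Ab Bc h2
  -- Ab*D2 = 1 - Bc*D2
  have hAbD2 : Ab * D2 = 1 - Bc * D2 := by
    rw [← e2a]; noncomm_ring
  -- (Aa+Bb)*D1*X = X
  have hreco : ∀ X : Matrix (Fin n) (Fin n) ℂ, (Aa + Bb) * D1 * X = X := by
    intro X; rw [e1a, one_mul]
  -- Key identity 1 : N * (D1 * Ab) = Ab * D2 * M
  have I1 : N * (D1 * Ab) = Ab * D2 * M := by
    have step : Ab * D2 * Bc = Bc * D2 * Aa * D1 * Ab + Bc * D2 * Bb * D1 * Ab := by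
      rw [sw2]
      calc Bc * D2 * Ab = Bc * D2 * ((Aa + Bb) * D1 * Ab) := by rw [hreco]
        _ = Bc * D2 * Aa * D1 * Ab + Bc * D2 * Bb * D1 * Ab := by noncomm_ring
    calc N * (D1 * Ab) = Aa * D1 * Ab + Bc * D2 * Bb * D1 * Ab := by
          rw [hN]; noncomm_ring
      _ = (1 - Bc * D2) * (Aa * D1 * Ab)
            + (Bc * D2 * Aa * D1 * Ab + Bc * D2 * Bb * D1 * Ab) := by noncomm_ring
      _ = Ab * D2 * (Aa * D1 * Ab) + Ab * D2 * Bc := by rw [← hAbD2, ← step]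
      _ = Ab * D2 * M := by rw [hM]; noncomm_ring
  -- Key identity 2 : Bb * D1 * N = M * (D2 * Bb)
  have I2 : Bb * D1 * N = M * (D2 * Bb) := by
    have step : Bb * D1 * (Bc * D2 * Bb) + Aa * D1 * (Bc * D2 * Bb) = Bc * D2 * Bb := by
      calc Bb * D1 * (Bc * D2 * Bb) + Aa * D1 * (Bc * D2 * Bb)
          = (Aa + Bb) * D1 * (Bc * D2 * Bb) := by noncomm_ring
        _ = Bc * D2 * Bb := hreco _
    calc Bb * D1 * N = Bb * D1 * Aa + Bb * D1 * (Bc * D2 * Bb) := by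
          rw [hN]; noncomm_ring
      _ = Aa * D1 * Bb + Bb * D1 * (Bc * D2 * Bb) := by rw [sw1]
      _ = Aa * D1 * Bb - Aa * D1 * (Bc * D2 * Bb)
            + (Bb * D1 * (Bc * D2 * Bb) + Aa * D1 * (Bc * D2 * Bb)) := by noncomm_ring
      _ = Aa * D1 * Bb - Aa * D1 * (Bc * D2 * Bb) + Bc * D2 * Bb := by rw [step]
      _ = Aa * D1 * ((1 - Bc * D2) * Bb) + Bc * D2 * Bb := by noncomm_ring
      _ = Aa * D1 * (Ab * D2 * Bb) + Bc * D2 * Bb := by rw [← hAbD2]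
      _ = M * (D2 * Bb) := by rw [hM]; noncomm_ring
  -- derive the inverted forms
  have J1 : D1 * Ab * M⁻¹ = N⁻¹ * (Ab * D2) := by
    have : N⁻¹ * (N * (D1 * Ab)) * M⁻¹ = N⁻¹ * (Ab * D2 * M) * M⁻¹ := by rw [I1]
    calc D1 * Ab * M⁻¹ = N⁻¹ * (N * (D1 * Ab)) * M⁻¹ := by
          rw [← mul_assoc, e4b, one_mul]
      _ = N⁻¹ * (Ab * D2 * M) * M⁻¹ := this
      _ = N⁻¹ * (Ab * D2) * (M * M⁻¹) := by noncomm_ring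
      _ = N⁻¹ * (Ab * D2) := by rw [e3a, mul_one]
  have J2 : M⁻¹ * (Bb * D1) = D2 * Bb * N⁻¹ := by
    have : M⁻¹ * (Bb * D1 * N) * N⁻¹ = M⁻¹ * (M * (D2 * Bb)) * N⁻¹ := by rw [I2]
    calc M⁻¹ * (Bb * D1) = M⁻¹ * (Bb * D1) * (N * N⁻¹) := by rw [e4a, mul_one]
      _ = M⁻¹ * (Bb * D1 * N) * N⁻¹ := by noncomm_ring
      _ = M⁻¹ * (M * (D2 * Bb)) * N⁻¹ := this
      _ = M⁻¹ * M * (D2 * Bb) * N⁻¹ := by noncomm_ring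
      _ = D2 * Bb * N⁻¹ := by rw [e3b, one_mul]
  refine Prod.ext ?_ ?_
  · show Aa * D1 * Ab * M⁻¹ * Ac = Aa * N⁻¹ * (Ab * D2 * Ac)
    calc Aa * D1 * Ab * M⁻¹ * Ac = Aa * (D1 * Ab * M⁻¹) * Ac := by noncomm_ring
      _ = Aa * (N⁻¹ * (Ab * D2)) * Ac := by rw [J1]
      _ = Aa * N⁻¹ * (Ab * D2 * Ac) := by noncomm_ring
  · show Bc * M⁻¹ * (Bb * D1 * Ba) = Bc * D2 * Bb * N⁻¹ * Ba
    calc Bc * M⁻¹ * (Bb * D1 * Ba) = Bc * (M⁻¹ * (Bb * D1)) * Ba := by noncomm_ring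
      _ = Bc * (D2 * Bb * N⁻¹) * Ba := by rw [J2]
      _ = Bc * D2 * Bb * N⁻¹ * Ba := by noncomm_ring
end

section
/- Let A, B be n×n complex matrices and U an n×m matrix with A U = B U Λ for some m×m matrix Λ. Suppose the iteration A_{k+1} = A_1(A_1 + B_k)⁻¹ A_k, B_{k+1} = B_k(A_1 + B_k)⁻¹ B_1, with A_1 = A, B_1 = B, is well defined for all k (i.e., each A_1 + B_k is invertible). Then for all k ≥ 1, A_k U = B_k U Λ^k. -/
theorem stmt_18 (n m : ℕ) (A B : Matrix (Fin n) (Fin n) ℂ)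
    (U : Matrix (Fin n) (Fin m) ℂ) (Λ : Matrix (Fin m) (Fin m) ℂ)
    (hU : A * U = B * U * Λ)
    (Aseq Bseq : ℕ → Matrix (Fin n) (Fin n) ℂ)
    (hA1 : Aseq 1 = A) (hB1 : Bseq 1 = B)
    (hinv : ∀ k ≥ 1, IsUnit (Aseq 1 + Bseq k))
    (hArec : ∀ k ≥ 1, Aseq (k + 1) = Aseq 1 * (Aseq 1 + Bseq k)⁻¹ * Aseq k)
    (hBrec : ∀ k ≥ 1, Bseq (k + 1) = Bseq k * (Aseq 1 + Bseq k)⁻¹ * Bseq 1) :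
    ∀ k ≥ 1, Aseq k * U = Bseq k * U * Λ ^ k := by
  intro k hk
  induction k with
  | zero => omega
  | succ k ih =>
    rcases Nat.eq_or_lt_of_le hk with h | h
    · have hk0 : k = 0 := by omega
      subst hk0
      simp [hA1, hB1, hU, pow_one]
    · have hk1 : 1 ≤ k := by omega
      have ih' := ih hk1
      set S := Aseq 1 + Bseq k with hS
      have hdet : IsUnit S.det := (Matrix.isUnit_iff_isUnit_det _).mp (hinv k hk1)
      have h1 : S * S⁻¹ = 1 := Matrix.mul_nonsing_inv _ hdet
      have h2 : S⁻¹ * S = 1 := Matrix.nonsing_inv_mul _ hdet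
      have hcomm : Aseq 1 * S⁻¹ * Bseq k = Bseq k * S⁻¹ * Aseq 1 := by
        calc Aseq 1 * S⁻¹ * Bseq k
            = (S - Bseq k) * S⁻¹ * Bseq k := by rw [hS, add_sub_cancel_right]
          _ = Bseq k - Bseq k * S⁻¹ * Bseq k := by
              rw [sub_mul, h1, sub_mul, one_mul]
          _ = Bseq k * S⁻¹ * (S - Bseq k) := by
              rw [mul_sub, Matrix.mul_assoc (Bseq k) S⁻¹ S, h2, mul_one]
          _ = Bseq k * S⁻¹ * Aseq 1 := by rw [hS, add_sub_cancel_right]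
      have hA1U : Aseq 1 * U = Bseq 1 * U * Λ := by rw [hA1, hB1, hU]
      calc Aseq (k + 1) * U
          = Bseq k * S⁻¹ * Aseq 1 * U * Λ ^ k := by
            rw [hArec k hk1]
            have := congrArg (· * (U * Λ ^ k)) hcomm
            simp only [Matrix.mul_assoc, ih'] at this ⊢
            exact this.symm ▸ this
        _ = Bseq k * S⁻¹ * Bseq 1 * U * Λ ^ (k + 1) := by
            rw [pow_succ']
            simp only [Matrix.mul_assoc, hA1U]
        _ = Bseq (k + 1) * U * Λ ^ (k + 1) := by
            rw [hBrec k hk1]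
end
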